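/- arXiv:1201.4075 — 2 statements merged into one kernel-verified Lean document; each statement's English description precedes it below -/
import Mathlib

section
/- Let K ⊆ {z ∈ ℂ : Re(z) < 0} be a nonempty compact convex set strictly contained in the open left half-plane. Then no function f ∈ Exp(K) is hypercyclic for T₁ on H(ℂ); in particular, every such f fails to have dense translation orbit in the topology of uniform convergence on compact sets. -/
open Filter Complex

/-- Support function `H_K(z) = sup { Re (z·u) : u ∈ K }` of a set `K ⊆ ℂ`. -/
noncomputable def suppFn (K : Set ℂ) (z : ℂ) : ℝ :=
  sSup ((fun u => (z * u).re) '' K)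

/-- The norm `‖f‖_{K,n} = sup_z |f z| · exp (−H_K z − |z|/n)`. -/
noncomputable def expNorm (K : Set ℂ) (n : ℕ) (f : ℂ → ℂ) : ℝ :=
  sSup (Set.range fun z : ℂ => ‖f z‖ * Real.exp (-(suppFn K z) - ‖z‖ / n))

/-- Membership in `Exp(K)`: `f` is entire and all the norms `‖f‖_{K,n}` are finite. -/
def MemExp (K : Set ℂ) (f : ℂ → ℂ) : Prop :=
  Differentiable ℂ f ∧ ∀ n : ℕ, 0 < n →
    BddAbove (Set.range fun z : ℂ => ‖f z‖ * Real.exp (-(suppFn K z) - ‖z‖ / n))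

open scoped Classical in
/-- Lower density of a set of natural numbers. -/
noncomputable def lowerDensity (A : Set ℕ) : ℝ :=
  liminf (fun N : ℕ =>
    (((Finset.range (N + 1)).filter (fun n => n ∈ A)).card : ℝ) / N) atTop

/-- Lower density of a discrete subset of `ℂ`. -/
noncomputable def ldensC (Λ : Set ℂ) : ℝ :=
  liminf (fun r : ℝ => (Nat.card {z : ℂ // z ∈ Λ ∧ ‖z‖ ≤ r} : ℝ) / r) atTop

/-- `f` is hypercyclic for the translation `T₁` on `Exp(K)`. -/
def HCExp (K : Set ℂ) (f : ℂ → ℂ) : Prop :=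
  MemExp K f ∧ ∀ g : ℂ → ℂ, MemExp K g → ∀ n : ℕ, 0 < n → ∀ ε > (0 : ℝ),
    ∃ k : ℕ, expNorm K n (fun z => f (z + (k : ℂ)) - g z) < ε

/-- `f` is frequently hypercyclic for the translation `T₁` on `Exp(K)`. -/
def FHCExp (K : Set ℂ) (f : ℂ → ℂ) : Prop :=
  MemExp K f ∧ ∀ g : ℂ → ℂ, MemExp K g → ∀ n : ℕ, 0 < n → ∀ ε > (0 : ℝ),
    0 < lowerDensity {k : ℕ | expNorm K n (fun z => f (z + (k : ℂ)) - g z) < ε}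

/-- `f` is hypercyclic (Birkhoff-universal) for `T₁` on `H(ℂ)`. -/
def HCEnt (f : ℂ → ℂ) : Prop :=
  Differentiable ℂ f ∧ ∀ g : ℂ → ℂ, Differentiable ℂ g → ∀ R > (0 : ℝ), ∀ ε > (0 : ℝ),
    ∃ k : ℕ, ∀ z : ℂ, ‖z‖ ≤ R → ‖f (z + (k : ℂ)) - g z‖ < ε

/-- `f` is frequently hypercyclic (frequently Birkhoff-universal) for `T₁` on `H(ℂ)`. -/
def FHCEnt (f : ℂ → ℂ) : Prop :=
  Differentiable ℂ f ∧ ∀ g : ℂ → ℂ, Differentiable ℂ g → ∀ R > (0 : ℝ), ∀ ε > (0 : ℝ),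
    0 < lowerDensity {k : ℕ | ∀ z : ℂ, ‖z‖ ≤ R → ‖f (z + (k : ℂ)) - g z‖ < ε}

/-- `f` is an entire function of (finite) exponential type. -/
def ExpType (f : ℂ → ℂ) : Prop :=
  Differentiable ℂ f ∧ ∃ C τ : ℝ, ∀ z : ℂ, ‖f z‖ ≤ C * Real.exp (τ * ‖z‖)

/-- The indicator function `h_f(θ) = limsup_{r→∞} log |f(r e^{iθ})| / r`. -/
noncomputable def indicatorFn (f : ℂ → ℂ) (θ : ℝ) : ℝ :=
  limsup (fun r : ℝ => Real.log ‖f ((r : ℂ) * Complex.exp (θ * Complex.I))‖ / r) atTop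

/-!
A compact `K` in the open left half-plane satisfies `Re u ≤ -δ` on `K` for some `δ > 0`, so
`H_K(t) ≤ -δ t` for `t ≥ 0`. Taking `n > 1/δ`, the weight `exp (-H_K(t) - t/n)` is at least `1`
on the positive real axis, so finiteness of `‖f‖_{K,n}` bounds `f` there, in particular on `ℕ`.
A hypercyclic function, however, comes uniformly close to every constant at some integer `k`.
-/

lemma suppFn_ofReal_le {K : Set ℂ} (hne : K.Nonempty) {c : ℝ} (hc : ∀ u ∈ K, u.re ≤ c)
    {t : ℝ} (ht : 0 ≤ t) : suppFn K t ≤ t * c := by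
  refine csSup_le (hne.image _) ?_
  rintro _ ⟨u, hu, rfl⟩
  simpa [Complex.mul_re] using mul_le_mul_of_nonneg_left (hc u hu) ht

lemma IsCompact.exists_re_le_neg {K : Set ℂ} (hKc : IsCompact K) (hK : K ⊆ {z : ℂ | z.re < 0}) :
    ∃ δ > 0, ∀ u ∈ K, u.re ≤ -δ := by
  rcases K.eq_empty_or_nonempty with rfl | hne
  · exact ⟨1, one_pos, by simp⟩
  obtain ⟨u₀, hu₀, hmax⟩ := hKc.exists_isMaxOn hne Complex.continuous_re.continuousOn
  exact ⟨-u₀.re, neg_pos.2 (hK hu₀), fun u hu => by simpa using hmax hu⟩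

lemma MemExp.exists_bound_ofReal {K : Set ℂ} (hne : K.Nonempty) {δ : ℝ} (hδ : 0 < δ)
    (hKδ : ∀ u ∈ K, u.re ≤ -δ) {f : ℂ → ℂ} (hf : MemExp K f) :
    ∃ M, ∀ t : ℝ, 0 ≤ t → ‖f t‖ ≤ M := by
  obtain ⟨n, hn⟩ := exists_nat_gt (1 / δ)
  have hn0 : (0 : ℝ) < n := (one_div_pos.2 hδ).trans hn
  have h1n : 1 / (n : ℝ) ≤ δ := by
    rw [div_le_iff₀ hn0]; rw [div_lt_iff₀ hδ] at hn; linarith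
  obtain ⟨M, hM⟩ := hf.2 n (by exact_mod_cast hn0)
  refine ⟨M, fun t ht => ?_⟩
  have hH : suppFn K t ≤ t * -δ := suppFn_ofReal_le hne hKδ ht
  have hweight : 1 ≤ Real.exp (-(suppFn K t) - ‖(t : ℂ)‖ / n) := by
    refine Real.one_le_exp ?_
    have : t / n ≤ t * δ := by
      rw [div_eq_mul_one_div]; exact mul_le_mul_of_nonneg_left h1n ht
    rw [Complex.norm_real, Real.norm_of_nonneg ht]
    linarith
  calc ‖f t‖ ≤ ‖f t‖ * Real.exp (-(suppFn K t) - ‖(t : ℂ)‖ / n) :=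
        le_mul_of_one_le_right (norm_nonneg _) hweight
    _ ≤ M := hM (Set.mem_range_self _)

lemma HCEnt.exists_lt_norm_natCast {f : ℂ → ℂ} (hf : HCEnt f) (M : ℝ) :
    ∃ k : ℕ, M < ‖f k‖ := by
  obtain ⟨k, hk⟩ := hf.2 (fun _ => ((|M| + 1 : ℝ) : ℂ)) (differentiable_const _) 1 one_pos 1
    one_pos
  refine ⟨k, ?_⟩
  have hclose : ‖f k - ((|M| + 1 : ℝ) : ℂ)‖ < 1 := by simpa using hk 0 (by simp)
  have hconst : ‖((|M| + 1 : ℝ) : ℂ)‖ = |M| + 1 := by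
    rw [Complex.norm_real, Real.norm_of_nonneg (by positivity)]
  have := norm_sub_norm_le ((|M| + 1 : ℝ) : ℂ) (f k)
  rw [norm_sub_rev, hconst] at this
  linarith [le_abs_self M]

theorem stmt10_general (K : Set ℂ) (hne : K.Nonempty) (hKc : IsCompact K)
    (hK : K ⊆ {z : ℂ | z.re < 0})
    (f : ℂ → ℂ) (hf : MemExp K f) : ¬ HCEnt f := by
  intro hHC
  obtain ⟨δ, hδ, hKδ⟩ := hKc.exists_re_le_neg hK
  obtain ⟨M, hM⟩ := hf.exists_bound_ofReal hne hδ hKδ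
  obtain ⟨k, hk⟩ := hHC.exists_lt_norm_natCast M
  exact hk.not_ge (by exact_mod_cast hM k k.cast_nonneg)

/-- **Remark 4 (first part).** If `K` is strictly contained in the open left half-plane,
no function of `Exp(K)` is hypercyclic for `T₁` on `H(ℂ)`. -/
theorem stmt10 (K : Set ℂ) (hne : K.Nonempty) (hKc : IsCompact K) (hKconv : Convex ℝ K)
    (hK : K ⊆ {z : ℂ | z.re < 0})
    (f : ℂ → ℂ) (hf : MemExp K f) : ¬ HCEnt f :=
  stmt10_general K hne hKc hK f hf
end

section
/- Let K ⊆ {z ∈ ℂ : Re(z) > 0} be a nonempty compact convex set strictly contained in the open right half-plane. Then no function f ∈ Exp(K) is hypercyclic for T₁ on Exp(K). -/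
/-!
Let `a > 0` bound `Re u` from below on `K` and take `1/n ≤ a`. Subadditivity of the support
function gives `H_K(z - k) ≤ H_K(z) - k a`, which absorbs the loss `k/n` in `e^{-|z|/n}`; hence
`‖f‖_{K,n} ≤ ‖f(· + k)‖_{K,n}` for every `k ∈ ℕ`. A hypercyclic `f` approximates `0` arbitrarily
well, so `f = 0`, but then it cannot approximate `e^{u z}` with `u ∈ K`, whose norm is at least `1`.
-/

open Filter Complex

section SupportFunction

variable {K : Set ℂ}

lemma suppFn_bddAbove (hKc : IsCompact K) (z : ℂ) : BddAbove ((fun u => (z * u).re) '' K) :=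
  (hKc.image (by fun_prop)).bddAbove

lemma re_mul_le_suppFn (hKc : IsCompact K) {u : ℂ} (hu : u ∈ K) (z : ℂ) :
    (z * u).re ≤ suppFn K z :=
  le_csSup (suppFn_bddAbove hKc z) ⟨u, hu, rfl⟩

lemma suppFn_zero (hne : K.Nonempty) : suppFn K 0 = 0 := by
  simp [suppFn, hne.image_const]

lemma suppFn_add_le (hne : K.Nonempty) (hKc : IsCompact K) (z w : ℂ) :
    suppFn K (z + w) ≤ suppFn K z + suppFn K w := by
  refine csSup_le (hne.image _) ?_
  rintro _ ⟨u, hu, rfl⟩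
  show ((z + w) * u).re ≤ _
  rw [add_mul, add_re]
  exact add_le_add (re_mul_le_suppFn hKc hu z) (re_mul_le_suppFn hKc hu w)

lemma suppFn_neg_ofReal_le (hne : K.Nonempty) {a : ℝ} (ha : ∀ u ∈ K, a ≤ u.re) {t : ℝ}
    (ht : 0 ≤ t) : suppFn K (-(t : ℂ)) ≤ -(t * a) := by
  refine csSup_le (hne.image _) ?_
  rintro _ ⟨u, hu, rfl⟩
  simpa using mul_le_mul_of_nonneg_left (ha u hu) ht

end SupportFunction

section ExpNorm

variable {K : Set ℂ} {n : ℕ}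

lemma exp_weight_le_mul (hne : K.Nonempty) (hKc : IsCompact K) (z w : ℂ) :
    Real.exp (-suppFn K z - ‖z‖ / n) ≤
      Real.exp (-suppFn K (z + w) - ‖z + w‖ / n) * Real.exp (suppFn K w + ‖w‖ / n) := by
  rw [← Real.exp_add, Real.exp_le_exp]
  have hH := suppFn_add_le hne hKc z w
  have hnorm : ‖z + w‖ / n ≤ ‖z‖ / n + ‖w‖ / n := by
    rw [← add_div]
    exact div_le_div_of_nonneg_right (norm_add_le z w) n.cast_nonneg
  linarith

lemma MemExp.comp_add (hne : K.Nonempty) (hKc : IsCompact K) {f : ℂ → ℂ} (hf : MemExp K f)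
    (w : ℂ) : MemExp K (fun z => f (z + w)) := by
  refine ⟨hf.1.comp (differentiable_id.add_const w), fun n hn => ?_⟩
  obtain ⟨C, hC⟩ := hf.2 n hn
  refine ⟨C * Real.exp (suppFn K w + ‖w‖ / n), ?_⟩
  rintro _ ⟨z, rfl⟩
  calc ‖f (z + w)‖ * Real.exp (-suppFn K z - ‖z‖ / n)
      ≤ ‖f (z + w)‖ * (Real.exp (-suppFn K (z + w) - ‖z + w‖ / n) *
          Real.exp (suppFn K w + ‖w‖ / n)) :=
        mul_le_mul_of_nonneg_left (exp_weight_le_mul hne hKc z w) (norm_nonneg _)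
    _ = ‖f (z + w)‖ * Real.exp (-suppFn K (z + w) - ‖z + w‖ / n) *
          Real.exp (suppFn K w + ‖w‖ / n) := by ring
    _ ≤ C * Real.exp (suppFn K w + ‖w‖ / n) :=
        mul_le_mul_of_nonneg_right (hC ⟨z + w, rfl⟩) (Real.exp_pos _).le

lemma memExp_zero : MemExp K 0 :=
  ⟨differentiable_const 0, fun _ _ => ⟨0, by simp [upperBounds]⟩⟩

lemma MemExp.le_expNorm {f : ℂ → ℂ} (hf : MemExp K f) (hn : 0 < n) (z : ℂ) :
    ‖f z‖ * Real.exp (-suppFn K z - ‖z‖ / n) ≤ expNorm K n f :=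
  le_csSup (hf.2 n hn) ⟨z, rfl⟩

lemma expNorm_neg (f : ℂ → ℂ) : expNorm K n (fun z => -f z) = expNorm K n f := by
  simp only [expNorm, norm_neg]

lemma MemExp.eq_zero_of_expNorm_nonpos {f : ℂ → ℂ} (hf : MemExp K f) (hn : 0 < n)
    (h : expNorm K n f ≤ 0) : f = 0 := by
  funext z
  exact norm_le_zero_iff.mp
    (nonpos_of_mul_nonpos_left ((hf.le_expNorm hn z).trans h) (Real.exp_pos _))

lemma expNorm_le_expNorm_comp_add (hne : K.Nonempty) (hKc : IsCompact K) {f : ℂ → ℂ}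
    (hf : MemExp K f) (hn : 0 < n) {w : ℂ} (hw : suppFn K (-w) + ‖w‖ / n ≤ 0) :
    expNorm K n f ≤ expNorm K n (fun z => f (z + w)) := by
  refine csSup_le (Set.range_nonempty _) ?_
  rintro _ ⟨z, rfl⟩
  have hweight := exp_weight_le_mul (n := n) hne hKc z (-w)
  rw [norm_neg] at hweight
  have hdecay := Real.exp_le_one_iff.mpr hw
  calc ‖f z‖ * Real.exp (-suppFn K z - ‖z‖ / n)
      ≤ ‖f z‖ * Real.exp (-suppFn K (z - w) - ‖z - w‖ / n) := by
        refine mul_le_mul_of_nonneg_left ?_ (norm_nonneg _)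
        simpa [← sub_eq_add_neg] using hweight.trans (mul_le_of_le_one_right (by positivity) hdecay)
    _ = ‖f (z - w + w)‖ * Real.exp (-suppFn K (z - w) - ‖z - w‖ / n) := by rw [sub_add_cancel]
    _ ≤ expNorm K n (fun z => f (z + w)) := (hf.comp_add hne hKc w).le_expNorm hn (z - w)

lemma expNorm_le_expNorm_comp_add_natCast (hne : K.Nonempty) (hKc : IsCompact K) {f : ℂ → ℂ}
    (hf : MemExp K f) (hn : 0 < n) (hK : ∀ u ∈ K, 1 / (n : ℝ) ≤ u.re) (k : ℕ) :
    expNorm K n f ≤ expNorm K n (fun z => f (z + k)) := by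
  refine expNorm_le_expNorm_comp_add hne hKc hf hn ?_
  have hk := suppFn_neg_ofReal_le hne hK k.cast_nonneg
  push_cast at hk
  rw [Complex.norm_natCast, ← mul_one_div]
  linarith

lemma memExp_exp_mul (hKc : IsCompact K) {u : ℂ} (hu : u ∈ K) :
    MemExp K (fun z => cexp (u * z)) := by
  refine ⟨by fun_prop, fun n _ => ⟨1, ?_⟩⟩
  rintro _ ⟨z, rfl⟩
  have hH : (z * u).re ≤ suppFn K z := re_mul_le_suppFn hKc hu z
  dsimp only
  rw [norm_exp, ← Real.exp_add, Real.exp_le_one_iff, mul_comm]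
  have : 0 ≤ ‖z‖ / n := by positivity
  linarith

lemma one_le_expNorm_exp_mul (hKc : IsCompact K) {u : ℂ} (hu : u ∈ K) (hn : 0 < n) :
    1 ≤ expNorm K n (fun z => cexp (u * z)) := by
  simpa [suppFn_zero ⟨u, hu⟩] using (memExp_exp_mul hKc hu).le_expNorm hn 0

end ExpNorm

lemma exists_pos_le_re {K : Set ℂ} (hKc : IsCompact K) (hK : K ⊆ {z : ℂ | 0 < z.re}) :
    ∃ a > 0, ∀ u ∈ K, a ≤ u.re :=
  hKc.exists_forall_le' continuous_re.continuousOn hK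

theorem stmt11_general (K : Set ℂ) (hne : K.Nonempty) (hKc : IsCompact K)
    (hK : K ⊆ {z : ℂ | 0 < z.re})
    (f : ℂ → ℂ) (hf : MemExp K f) : ¬ HCExp K f := by
  rintro ⟨-, hyp⟩
  obtain ⟨a, ha, haK⟩ := exists_pos_le_re hKc hK
  obtain ⟨n, hn, hnK⟩ : ∃ n : ℕ, 0 < n ∧ ∀ u ∈ K, 1 / (n : ℝ) ≤ u.re := by
    obtain ⟨n, hn⟩ := exists_nat_one_div_lt ha
    exact ⟨n + 1, n.succ_pos, fun u hu => by exact_mod_cast hn.le.trans (haK u hu)⟩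
  have hshift := expNorm_le_expNorm_comp_add_natCast hne hKc hf hn hnK
  have hf0 : f = 0 := by
    refine hf.eq_zero_of_expNorm_nonpos hn (le_of_forall_pos_lt_add fun ε hε => ?_)
    obtain ⟨k, hk⟩ := hyp 0 memExp_zero n hn ε hε
    simp only [Pi.zero_apply, sub_zero] at hk
    simpa using (hshift k).trans_lt hk
  obtain ⟨u, hu⟩ := hne
  obtain ⟨k, hk⟩ := hyp _ (memExp_exp_mul hKc hu) n hn 1 one_pos
  simp only [hf0, Pi.zero_apply, zero_sub, expNorm_neg] at hk
  exact (one_le_expNorm_exp_mul hKc hu hn).not_gt hk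

/-- **Remark 4 (second part).** If `K` is strictly contained in the open right
half-plane, no function of `Exp(K)` is hypercyclic for `T₁` on `Exp(K)`. -/
theorem stmt11 (K : Set ℂ) (hne : K.Nonempty) (hKc : IsCompact K) (hKconv : Convex ℝ K)
    (hK : K ⊆ {z : ℂ | 0 < z.re})
    (f : ℂ → ℂ) (hf : MemExp K f) : ¬ HCExp K f :=
  stmt11_general K hne hKc hK f hf
end
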